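/- (Confluent reduction preserves the stability function.) Let (A, b) be an s-stage DIRK scheme (A lower triangular, c = A e) with c₁ = … = c_r for some 2 ≤ r ≤ s, and let (A*, b*) be the reduced scheme defined by a*₁₁ = a₁₁; a*_{i1} = Σ_{j=1}^{r} a_{r+i−1, j} and a*_{ij} = a_{r+i−1, r+j−1} for i ≥ 2, j ≥ 2; b*₁ = Σ_{j=1}^{r} b_j and b*_i = b_{r+i−1} for i ≥ 2. Then for every z ∈ ℝ such that both I − zA and I − zA* are invertible, the stability functions coincide: 1 + z b^T (I − zA)^{-1} e = 1 + z (b*)^T (I − zA*)^{-1} e*, where e and e* are the all-ones vectors of the appropriate lengths. -/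

import Mathlib

/-!
With `u = (I - zA)⁻¹ e`, the stability function is `1 + z bᵀu`, and `u = e + z A u`. For a lower
triangular `A` this is solved by forward substitution, and by induction every stage `j` among the
first `r`, whose row sum is `c₁`, satisfies `(1 - z c₁) u_j = 1`; so the confluent stages share one
value. In the sums `∑ⱼ a_ij u_j` and `∑ⱼ b_j u_j` the first `r` terms can then be merged into one,
which is exactly what the reduced scheme does: `u` restricted to stages `1, r+1, …, s` solves the
reduced system `v = e + z A* v`, and `bᵀu = b*ᵀv`.
-/

open Matrix Finset

section StabilityFunction

variable {ι K : Type*} [Fintype ι] [Field K]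

theorem inv_one_sub_smul_mulVec_one_eq_iff [DecidableEq ι] {A : Matrix ι ι K} {z : K}
    (hdet : (1 - z • A).det ≠ 0) {u : ι → K} :
    (1 - z • A)⁻¹ *ᵥ (fun _ => 1) = u ↔ u = 1 + z • A *ᵥ u := by
  have hsys : (1 - z • A) *ᵥ u = (fun _ => 1) ↔ u = 1 + z • A *ᵥ u := by
    rw [sub_mulVec, one_mulVec, smul_mulVec, sub_eq_iff_eq_add]
    rfl
  rw [← hsys]
  have hunit : IsUnit (1 - z • A) := (isUnit_iff_isUnit_det _).2 (isUnit_iff_ne_zero.2 hdet)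
  constructor
  · rintro rfl
    rw [mulVec_mulVec, mul_nonsing_inv _ ((isUnit_iff_isUnit_det _).1 hunit), one_mulVec]
  · intro h
    rw [← h, mulVec_mulVec, nonsing_inv_mul _ ((isUnit_iff_isUnit_det _).1 hunit), one_mulVec]

variable [LinearOrder ι]

theorem Matrix.IsLowerTriangular.one_sub_smul_diag_ne_zero [DecidableEq ι] {A : Matrix ι ι K}
    (hA : A.IsLowerTriangular) {z : K} (hdet : (1 - z • A).det ≠ 0) (i : ι) :
    1 - z * A i i ≠ 0 := by
  have hM : (1 - z • A).IsLowerTriangular :=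
    blockTriangular_one.sub fun i j h => by simp [hA h]
  rw [det_of_isLowerTriangular _ hM, prod_ne_zero_iff] at hdet
  simpa using hdet i (mem_univ i)

theorem Matrix.IsLowerTriangular.one_sub_mul_mul_eq_one_of_rowSum_eq [WellFoundedLT ι]
    {A : Matrix ι ι K} (hA : A.IsLowerTriangular) {z c : K} {u : ι → K}
    (hu : u = 1 + z • A *ᵥ u) (hdiag : ∀ i, 1 - z * A i i ≠ 0) {S : Set ι} (hS : IsLowerSet S)
    (hc : ∀ j ∈ S, ∑ k, A j k = c) : ∀ j ∈ S, (1 - z * c) * u j = 1 := by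
  intro j
  induction j using WellFoundedLT.induction with
  | _ j ih =>
  intro hj
  set w := (1 - z * c) * u j with hw_def
  have hrow : u j = 1 + z * ∑ k, A j k * u k := by
    simpa [mulVec, dotProduct] using congrFun hu j
  have hoff : ∀ k ≠ j, A j k * ((1 - z * c) * u k) - A j k = 0 := by
    intro k hk
    rcases lt_or_gt_of_ne hk with hkj | hjk
    · rw [ih k hkj (hS hkj.le hj), mul_one, sub_self]
    · rw [hA hjk, zero_mul, sub_self]
  have hsum : ∑ k, (A j k * ((1 - z * c) * u k) - A j k) = A j j * w - A j j :=
    sum_eq_single j (fun k _ hk => hoff k hk) (by simp)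
  rw [sum_sub_distrib, hc j hj] at hsum
  have hscale : ∑ k, A j k * ((1 - z * c) * u k) = (1 - z * c) * ∑ k, A j k * u k := by
    rw [mul_sum]
    exact sum_congr rfl fun k _ => mul_left_comm _ _ _
  have hw : (1 - z * A j j) * (w - 1) = 0 := by
    linear_combination hw_def + (1 - z * c) * hrow - z * hscale + z * hsum
  exact sub_eq_zero.1 ((mul_eq_zero.1 hw).resolve_left (hdiag j))

theorem Matrix.IsLowerTriangular.eq_of_rowSum_eq [WellFoundedLT ι]
    {A : Matrix ι ι K} (hA : A.IsLowerTriangular) {z c : K} {u : ι → K}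
    (hu : u = 1 + z • A *ᵥ u) (hdiag : ∀ i, 1 - z * A i i ≠ 0) {S : Set ι} (hS : IsLowerSet S)
    (hc : ∀ j ∈ S, ∑ k, A j k = c) {j k : ι} (hj : j ∈ S) (hk : k ∈ S) : u j = u k := by
  have hmul := hA.one_sub_mul_mul_eq_one_of_rowSum_eq hu hdiag hS hc
  exact mul_left_cancel₀ (left_ne_zero_of_mul_eq_one (hmul j hj))
    ((hmul j hj).trans (hmul k hk).symm)

end StabilityFunction

section ConfluentReduction

variable {R : Type*} [CommSemiring R] {s r : ℕ}

theorem Fin.sum_eq_sum_filter_lt_add_sum_add {M : Type*} [AddCommMonoid M] (r : ℕ)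
    (f : Fin s → M) :
    ∑ k, f k = ∑ k ∈ univ.filter (fun k : Fin s => (k : ℕ) < r), f k +
      ∑ i : Fin (s - r), f ⟨r + i, by omega⟩ := by
  rw [← sum_filter_add_sum_filter_not univ (fun k : Fin s => (k : ℕ) < r)]
  congr 1
  refine sum_bij' (fun k hk => ⟨k - r, by simp at hk; omega⟩) (fun i _ => ⟨r + i, by omega⟩)
    ?_ ?_ ?_ ?_ ?_ <;> intro k hk <;> simp only [mem_filter, mem_univ, true_and, not_lt] at hk
  · exact mem_univ _
  · simp
  · ext; simp only; omega
  · ext; simp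
  · congr; ext; simp only; omega

/-- The paper's `b ↦ b*`, also applied to the rows of `A`; reduced stages are indexed from `0`. -/
def confluentReduce (r : ℕ) (g : Fin s → R) : Fin (s - r + 1) → R :=
  Fin.cases (∑ k ∈ univ.filter (fun k : Fin s => (k : ℕ) < r), g k)
    fun i => g ⟨r + i, by omega⟩

theorem eq_confluentReduce {g : Fin s → R} {g' : Fin (s - r + 1) → R}
    (h0 : g' 0 = ∑ k ∈ univ.filter (fun k : Fin s => (k : ℕ) < r), g k)
    (hsucc : ∀ i : Fin (s - r), g' i.succ = g ⟨r + i, by omega⟩) :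
    g' = confluentReduce r g := by
  funext i
  cases i using Fin.cases with
  | zero => exact h0
  | succ i => exact hsucc i

theorem confluentReduce_dotProduct {g u : Fin s → R} {v : Fin (s - r + 1) → R} {a : R}
    (hu : ∀ k : Fin s, (k : ℕ) < r → u k = a) (hv0 : v 0 = a)
    (hv : ∀ i : Fin (s - r), v i.succ = u ⟨r + i, by omega⟩) :
    confluentReduce r g ⬝ᵥ v = g ⬝ᵥ u := by
  rw [dotProduct, Fin.sum_univ_succ, dotProduct,
    Fin.sum_eq_sum_filter_lt_add_sum_add r fun k => g k * u k]
  simp only [confluentReduce, Fin.cases_zero, Fin.cases_succ, hv0, hv]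
  congr 1
  rw [sum_mul]
  exact sum_congr rfl fun k hk => by rw [hu k (mem_filter.1 hk).2]

theorem Matrix.IsLowerTriangular.eq_confluentReduce_row_zero {A : Matrix (Fin s) (Fin s) R}
    (hA : A.IsLowerTriangular) (hr : 0 < r) {k₀ : Fin s} (hk₀ : (k₀ : ℕ) = 0)
    {g' : Fin (s - r + 1) → R} (h0 : g' 0 = A k₀ k₀) (hsucc : ∀ i : Fin (s - r), g' i.succ = 0) :
    g' = confluentReduce r (A k₀) := by
  have hlt (k : Fin s) (hk : k ≠ k₀) : k₀ < k := by
    rw [Fin.lt_def, hk₀]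
    exact Nat.pos_of_ne_zero fun h => hk (Fin.ext (h.trans hk₀.symm))
  refine eq_confluentReduce ?_ fun i => ?_
  · rw [h0, sum_eq_single_of_mem k₀ (by simp [hk₀, hr])]
    exact fun k _ hk => hA (hlt k hk)
  · have hne : (⟨r + i, by omega⟩ : Fin s) ≠ k₀ := by
      rw [Ne, Fin.ext_iff, hk₀, Fin.val_mk]; omega
    rw [hsucc, hA (hlt _ hne)]

end ConfluentReduction

/-- Confluent reduction preserves the stability function: if the first `r` abscissas of
an `s`-stage DIRK scheme coincide and `(A', b')` is the reduced `(s−r+1)`-stage scheme,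
then for every `z` with `I − zA` and `I − zA'` invertible,
`1 + z bᵀ (I − zA)⁻¹ e = 1 + z b'ᵀ (I − zA')⁻¹ e'`. -/
theorem stmt10 {s r : ℕ} (hr : 2 ≤ r) (hrs : r ≤ s)
    (A : Matrix (Fin s) (Fin s) ℝ) (b : Fin s → ℝ)
    (hlow : ∀ i j : Fin s, i < j → A i j = 0)
    (c : Fin s → ℝ) (hc : c = A.mulVec fun _ => 1)
    (hconf : ∀ j : Fin s, (j : ℕ) < r → c j = c ⟨0, by omega⟩)
    (emb : Fin (s - r + 1) → Fin s)
    (hemb : ∀ i : Fin (s - r + 1),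
      emb i = if (i : ℕ) = 0 then ⟨0, by omega⟩
        else ⟨r - 1 + (i : ℕ), by have := i.isLt; omega⟩)
    (A' : Matrix (Fin (s - r + 1)) (Fin (s - r + 1)) ℝ) (b' : Fin (s - r + 1) → ℝ)
    (hA'00 : A' ⟨0, by omega⟩ ⟨0, by omega⟩ = A ⟨0, by omega⟩ ⟨0, by omega⟩)
    (hA'0j : ∀ j : Fin (s - r + 1), (j : ℕ) ≠ 0 → A' ⟨0, by omega⟩ j = 0)
    (hA'i0 : ∀ i : Fin (s - r + 1), (i : ℕ) ≠ 0 →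
      A' i ⟨0, by omega⟩ =
        ∑ j ∈ Finset.univ.filter (fun j : Fin s => (j : ℕ) < r), A (emb i) j)
    (hA'ij : ∀ i j : Fin (s - r + 1), (i : ℕ) ≠ 0 → (j : ℕ) ≠ 0 →
      A' i j = A (emb i) (emb j))
    (hb'0 : b' ⟨0, by omega⟩ = ∑ j ∈ Finset.univ.filter (fun j : Fin s => (j : ℕ) < r), b j)
    (hb'i : ∀ i : Fin (s - r + 1), (i : ℕ) ≠ 0 → b' i = b (emb i)) :
    ∀ z : ℝ, (1 - z • A).det ≠ 0 → (1 - z • A').det ≠ 0 →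
      1 + z * (b ⬝ᵥ (1 - z • A)⁻¹.mulVec fun _ => 1) =
        1 + z * (b' ⬝ᵥ (1 - z • A')⁻¹.mulVec fun _ => 1) := by
  intro z hdet hdet'
  have hA : A.IsLowerTriangular := fun i j h => hlow i j h
  set k₀ : Fin s := ⟨0, by omega⟩
  have hemb0 : emb 0 = k₀ := by simp [hemb]
  have hemb_succ (i : Fin (s - r)) : emb i.succ = ⟨r + i, by omega⟩ := by
    simp only [hemb, Fin.val_succ, Nat.add_one_ne_zero, if_false]
    ext; simp only; omega
  set u := (1 - z • A)⁻¹ *ᵥ fun _ => 1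
  have hu : u = 1 + z • A *ᵥ u := (inv_one_sub_smul_mulVec_one_eq_iff hdet).1 rfl
  have hrowSum (k : Fin s) : ∑ j, A k j = c k := by simp [hc, mulVec, dotProduct]
  have hconst (k : Fin s) (hk : (k : ℕ) < r) : u k = u k₀ :=
    hA.eq_of_rowSum_eq hu (hA.one_sub_smul_diag_ne_zero hdet) (S := {k : Fin s | (k : ℕ) < r})
      (fun _ _ hle hk => Nat.lt_of_le_of_lt hle hk) (fun k hk => (hrowSum k).trans (hconf k hk))
      hk (by simp [k₀]; omega)
  have hreduce (g : Fin s → ℝ) : confluentReduce r g ⬝ᵥ (u ∘ emb) = g ⬝ᵥ u :=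
    confluentReduce_dotProduct hconst (by simp [hemb0]) (by simp [hemb_succ])
  have hb' : b' = confluentReduce r b :=
    eq_confluentReduce hb'0 fun i => by rw [hb'i _ (by simp), hemb_succ]
  have hA' (i : Fin (s - r + 1)) : A' i = confluentReduce r (A (emb i)) := by
    cases i using Fin.cases with
    | zero =>
      rw [hemb0]
      exact hA.eq_confluentReduce_row_zero (by omega) rfl hA'00 fun j => hA'0j _ (by simp)
    | succ i =>
      exact eq_confluentReduce (hA'i0 _ (by simp)) fun j => by
        rw [hA'ij _ _ (by simp) (by simp), hemb_succ, hemb_succ]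
  have hv : (1 - z • A')⁻¹ *ᵥ (fun _ => 1) = u ∘ emb := by
    refine (inv_one_sub_smul_mulVec_one_eq_iff hdet').2 (funext fun i => ?_)
    change u (emb i) = 1 + z * (A' i ⬝ᵥ (u ∘ emb))
    rw [hA' i, hreduce]
    exact congrFun hu (emb i)
  rw [hv, hb', hreduce]
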